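/- Let a > 1/2 and η ∈ [−1/4, 1/4]. For all cycle configurations ω = (X,X̄,σ,T), ω' = (X',X̄',σ',T') with (T,T') ≠ (A,B) and all Z, Γ ∈ ℝ: H_middle,a,η(ω|Z,Γ|ω') ≥ H_middle,a,η(ω|Z,Γ|ω') − H_expII ≥ c7(a)·(|X| + |X̄| + |Z| + |Γ| + |X'| + |X̄'|), where c7(a) = (1/16)·min{a − 1/2, 1} > 0. -/
import Mathlib


open MeasureTheory Real

/-- Tree labels A, B, C, D encoded as `Fin 4`. -/
abbrev TreeLabel := Fin 4

def lA : TreeLabel := 0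
def lB : TreeLabel := 1
def lC : TreeLabel := 2
def lD : TreeLabel := 3

/-- A cycle configuration `(X, X̄, σ, T)`; the sign `σ` is encoded as a `Bool`. -/
abbrev CycleConfig := ℝ × ℝ × Bool × TreeLabel

/-- The numerical value of a sign. -/
noncomputable def sgnv (b : Bool) : ℝ := if b then 1 else -1

/-- Real-valued indicator of a proposition. -/
noncomputable def indR (p : Prop) [Decidable p] : ℝ := if p then 1 else 0

/-- `U = (X + X̄)/2`. -/
noncomputable def Uof (ω : CycleConfig) : ℝ := (ω.1 + ω.2.1) / 2

/-- `W = Γ + U' − U`. -/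
noncomputable def Wof (ω : CycleConfig) (Γ : ℝ) (ω' : CycleConfig) : ℝ :=
  Γ + Uof ω' - Uof ω

noncomputable def Hln (a : ℝ) (ω : CycleConfig) (Z Γ : ℝ) (ω' : CycleConfig) : ℝ :=
  ((3 * a + 1) / 2) *
    (Real.log (exp (ω.1 + Wof ω Γ ω' / 2) + exp (ω'.1 - Wof ω Γ ω' / 2) + exp Z)
      + Real.log (exp (ω.2.1 + Wof ω Γ ω' / 2) + exp (ω'.2.1 - Wof ω Γ ω' / 2) + exp Z))

noncomputable def Hlinear (a : ℝ) (ω : CycleConfig) (Z : ℝ) (ω' : CycleConfig) : ℝ :=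
  -(a + 1 / 2) * (Uof ω + Uof ω' + Z)

noncomputable def Htree (ω : CycleConfig) (Z Γ : ℝ) (ω' : CycleConfig) : ℝ :=
  (1 / 2) * (indR (ω.2.2.2 = lC) * ω.1 + indR (ω.2.2.2 = lD) * ω.2.1
      + indR (ω'.2.2.2 = lC) * ω'.1 + indR (ω'.2.2.2 = lD) * ω'.2.1)
    + (indR (ω'.2.2.2 = lB) + indR (ω.2.2.2 = lA)) * Z
    + (1 / 2) * (indR (ω'.2.2.2 = lB) - indR (ω.2.2.2 = lA)) * Wof ω Γ ω'
    - (1 / 2) * (indR (ω.2.2.2 = lA) - indR (ω.2.2.2 = lB)) * Uof ω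
    + (1 / 2) * (indR (ω'.2.2.2 = lA) - indR (ω'.2.2.2 = lB)) * Uof ω'

noncomputable def HexpI (ω : CycleConfig) (ω' : CycleConfig) : ℝ :=
  (1 / 4) * (exp (-ω.1) + exp (-ω.2.1) + exp (-ω'.1) + exp (-ω'.2.1))

noncomputable def HexpII (ω : CycleConfig) (Z Γ : ℝ) (ω' : CycleConfig) : ℝ :=
  (1 / 2) * (sgnv ω.2.2.1 * exp (Wof ω Γ ω' / 4) - sgnv ω'.2.2.1 * exp (-Wof ω Γ ω' / 4)) ^ 2
    * exp (-Z)

/-- The (finite part of the) middle Hamiltonian `H_middle,a,η`. -/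
noncomputable def Hmid (a η : ℝ) (ω : CycleConfig) (Z Γ : ℝ) (ω' : CycleConfig) : ℝ :=
  Hln a ω Z Γ ω' + Hlinear a ω Z ω' + Htree ω Z Γ ω' + HexpI ω ω' + HexpII ω Z Γ ω' - η * Γ

/-- The left boundary Hamiltonian `H_left,a(Z|ω)`. -/
noncomputable def Hleft (a : ℝ) (Z : ℝ) (ω : CycleConfig) : ℝ :=
  a * Real.log (exp ω.2.1 + exp Z)
    + (a + 1 / 2) * (Real.log (exp ω.1 + exp Z) - Uof ω - Z)
    + (1 / 2) * (indR (ω.2.2.2 = lC) * ω.1 + indR (ω.2.2.2 = lD) * ω.2.1)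
    + indR (ω.2.2.2 = lB) * Z
    + (1 / 2) * (indR (ω.2.2.2 = lA) - indR (ω.2.2.2 = lB)) * Uof ω
    + (1 / 4) * (exp (-ω.1) + exp (-ω.2.1)) + (1 / 2) * exp (-Z)
    + Uof ω / 4

/-- The right boundary Hamiltonian `H_right,a(ω|Z)`. -/
noncomputable def Hright (a : ℝ) (ω : CycleConfig) (Z : ℝ) : ℝ :=
  (a + 1 / 2) * (Real.log (exp ω.1 + exp Z) + Real.log (exp ω.2.1 + exp Z) - Uof ω - Z)
    + (1 / 2) * (indR (ω.2.2.2 = lC) * ω.1 + indR (ω.2.2.2 = lD) * ω.2.1)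
    + indR (ω.2.2.2 = lA) * Z
    - (1 / 2) * (indR (ω.2.2.2 = lA) - indR (ω.2.2.2 = lB)) * Uof ω
    + (1 / 4) * (exp (-ω.1) + exp (-ω.2.1)) + (1 / 2) * exp (-Z)
    - Uof ω / 4

private lemma log3_le₁ (p q r : ℝ) : p ≤ Real.log (exp p + exp q + exp r) := by
  rw [Real.le_log_iff_exp_le (by positivity)]
  nlinarith [Real.exp_pos q, Real.exp_pos r]

private lemma log3_le₂ (p q r : ℝ) : q ≤ Real.log (exp p + exp q + exp r) := by
  rw [Real.le_log_iff_exp_le (by positivity)]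
  nlinarith [Real.exp_pos p, Real.exp_pos r]

private lemma log3_le₃ (p q r : ℝ) : r ≤ Real.log (exp p + exp q + exp r) := by
  rw [Real.le_log_iff_exp_le (by positivity)]
  nlinarith [Real.exp_pos p, Real.exp_pos q]

set_option maxHeartbeats 2000000 in
/-- Proposition 3.2: linear lower bound for the middle Hamiltonian, for `a > 1/2`
and `η ∈ [−1/4, 1/4]`, with constant `c₇(a) = (1/16)·min{a − 1/2, 1}`. -/
theorem middle_hamiltonian_lower_bound (a η : ℝ) (ha : 1 / 2 < a)
    (hη₁ : -(1 / 4) ≤ η) (hη₂ : η ≤ 1 / 4)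
    (ω ω' : CycleConfig) (hTT' : ¬(ω.2.2.2 = lA ∧ ω'.2.2.2 = lB)) (Z Γ : ℝ) :
    Hmid a η ω Z Γ ω' - HexpII ω Z Γ ω' ≤ Hmid a η ω Z Γ ω' ∧
    (1 / 16) * min (a - 1 / 2) 1 * (|ω.1| + |ω.2.1| + |Z| + |Γ| + |ω'.1| + |ω'.2.1|) ≤
      Hmid a η ω Z Γ ω' - HexpII ω Z Γ ω' := by
  obtain ⟨X, Xb, σ, T⟩ := ω
  obtain ⟨X', Xb', σ', T'⟩ := ω'
  have hexpII : 0 ≤ HexpII (X, Xb, σ, T) Z Γ (X', Xb', σ', T') := by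
    unfold HexpII; positivity
  refine ⟨by linarith, ?_⟩
  set U : ℝ := (X + Xb) / 2 with hU
  set U' : ℝ := (X' + Xb') / 2 with hU'
  set W : ℝ := Γ + U' - U with hW
  set L1 : ℝ := Real.log (exp (X + W / 2) + exp (X' - W / 2) + exp Z) with hL1
  set L2 : ℝ := Real.log (exp (Xb + W / 2) + exp (Xb' - W / 2) + exp Z) with hL2
  set E1 : ℝ := exp (-X) with hE1
  set E2 : ℝ := exp (-Xb) with hE2
  set E3 : ℝ := exp (-X') with hE3
  set E4 : ℝ := exp (-Xb') with hE4
  have h1 : X + W / 2 ≤ L1 := log3_le₁ _ _ _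
  have h2 : X' - W / 2 ≤ L1 := log3_le₂ _ _ _
  have h3 : Z ≤ L1 := log3_le₃ _ _ _
  have h4 : Xb + W / 2 ≤ L2 := log3_le₁ _ _ _
  have h5 : Xb' - W / 2 ≤ L2 := log3_le₂ _ _ _
  have h6 : Z ≤ L2 := log3_le₃ _ _ _
  have e1 : 1 - X ≤ E1 := by rw [hE1]; linarith [Real.add_one_le_exp (-X)]
  have e2 : 1 - Xb ≤ E2 := by rw [hE2]; linarith [Real.add_one_le_exp (-Xb)]
  have e3 : 1 - X' ≤ E3 := by rw [hE3]; linarith [Real.add_one_le_exp (-X')]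
  have e4 : 1 - Xb' ≤ E4 := by rw [hE4]; linarith [Real.add_one_le_exp (-Xb')]
  have e1' : 0 ≤ E1 := (Real.exp_pos _).le
  have e2' : 0 ≤ E2 := (Real.exp_pos _).le
  have e3' : 0 ≤ E3 := (Real.exp_pos _).le
  have e4' : 0 ≤ E4 := (Real.exp_pos _).le
  have aX : |X| ≤ X + 2 * E1 := by
    rcases abs_cases X with ⟨h, h0⟩ | ⟨h, h0⟩ <;> rw [h] <;> linarith
  have aXb : |Xb| ≤ Xb + 2 * E2 := by
    rcases abs_cases Xb with ⟨h, h0⟩ | ⟨h, h0⟩ <;> rw [h] <;> linarith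
  have aX' : |X'| ≤ X' + 2 * E3 := by
    rcases abs_cases X' with ⟨h, h0⟩ | ⟨h, h0⟩ <;> rw [h] <;> linarith
  have aXb' : |Xb'| ≤ Xb' + 2 * E4 := by
    rcases abs_cases Xb' with ⟨h, h0⟩ | ⟨h, h0⟩ <;> rw [h] <;> linarith
  have hG : |Γ| ≤ L1 + L2 - U - U' := by
    rcases abs_cases Γ with ⟨h, h0⟩ | ⟨h, h0⟩ <;> rw [h] <;> linarith
  have hG0 : 0 ≤ |Γ| := abs_nonneg Γ
  have hEta : η * Γ ≤ |Γ| / 4 := by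
    calc η * Γ ≤ |η * Γ| := le_abs_self _
      _ = |η| * |Γ| := abs_mul _ _
      _ ≤ (1 / 4) * |Γ| := by
          apply mul_le_mul_of_nonneg_right _ (abs_nonneg Γ)
          rw [abs_le]; constructor <;> linarith
      _ = |Γ| / 4 := by ring
  have key : (0 ≤ (5 / 4) * (L1 + L2) - (U + U' + Z)
        + Htree (X, Xb, σ, T) Z Γ (X', Xb', σ', T')
        + (1 / 4) * (E1 + E2 + E3 + E4) - η * Γ) ∧
      ((1 / 16) * (|X| + |Xb| + |Z| + |Γ| + |X'| + |Xb'|) ≤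
        (11 / 4) * (L1 + L2) - 2 * (U + U' + Z)
        + Htree (X, Xb, σ, T) Z Γ (X', Xb', σ', T')
        + (1 / 4) * (E1 + E2 + E3 + E4) - η * Γ) := by
    fin_cases T <;> fin_cases T' <;>
      [skip; (exact absurd ⟨rfl, rfl⟩ hTT'); skip; skip; skip; skip; skip; skip;
       skip; skip; skip; skip; skip; skip; skip; skip] <;>
      simp (config := { decide := true }) only [Htree, Uof, Wof, indR, lA, lB, lC, lD] <;>
      norm_num <;>
      refine ⟨by linarith, ?_⟩ <;>
      rcases abs_cases Z with ⟨hZ, hZ0⟩ | ⟨hZ, hZ0⟩ <;> linarith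
  obtain ⟨hA, hB'⟩ := key
  have hB0 : 0 ≤ (3 / 2) * (L1 + L2) - (U + U' + Z) := by linarith
  have hIval : HexpI (X, Xb, σ, T) (X', Xb', σ', T') = (1 / 4) * (E1 + E2 + E3 + E4) := by
    rw [hE1, hE2, hE3, hE4]; simp [HexpI]
  have hiden : Hmid a η (X, Xb, σ, T) Z Γ (X', Xb', σ', T')
        - HexpII (X, Xb, σ, T) Z Γ (X', Xb', σ', T')
      = ((5 / 4) * (L1 + L2) - (U + U' + Z)
          + Htree (X, Xb, σ, T) Z Γ (X', Xb', σ', T')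
          + HexpI (X, Xb, σ, T) (X', Xb', σ', T') - η * Γ)
        + (a - 1 / 2) * ((3 / 2) * (L1 + L2) - (U + U' + Z)) := by
    rw [hL1, hL2, hW, hU, hU']
    simp only [Hmid, Hln, Hlinear, Uof, Wof]
    ring
  rw [hiden, hIval]
  set m : ℝ := min (a - 1 / 2) 1 with hm
  have hm0 : 0 < m := lt_min (by linarith) one_pos
  have hm1 : m ≤ 1 := min_le_right _ _
  have hms : m ≤ a - 1 / 2 := min_le_left _ _
  have habs : 0 ≤ |X| + |Xb| + |Z| + |Γ| + |X'| + |Xb'| := by positivity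
  nlinarith [mul_nonneg (by linarith : (0:ℝ) ≤ 1 - m) hA,
    mul_nonneg hm0.le (by linarith : (0:ℝ) ≤ (11 / 4) * (L1 + L2) - 2 * (U + U' + Z)
      + Htree (X, Xb, σ, T) Z Γ (X', Xb', σ', T') + (1 / 4) * (E1 + E2 + E3 + E4) - η * Γ
      - (1 / 16) * (|X| + |Xb| + |Z| + |Γ| + |X'| + |Xb'|)),
    mul_nonneg (by linarith : (0:ℝ) ≤ a - 1 / 2 - m) hB0]
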